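/- Let p be a prime and n ≥ 1. Every g ∈ Sp_{2n}(ℚ_p) can be written as g = q · c(p) · k with q ∈ [P,P](ℚ_p), c ∈ ℤ, and k ∈ Sp_{2n}(ℤ_p), where c(p) := diag(p^{−c}, I_{n−1}, p^{c}, I_{n−1}); moreover the integer c is uniquely determined by g. Equivalently, Sp_{2n}(ℚ_p) is the disjoint union over c ∈ ℤ of the double cosets [P,P](ℚ_p)·c(p)·Sp_{2n}(ℤ_p). -/

import Mathlib

open Matrix

/-- The standard symplectic structure matrix `J = (0, Iₙ; -Iₙ, 0)`. -/
def Jmat (F : Type*) [Field F] (n : ℕ) : Matrix (Fin n ⊕ Fin n) (Fin n ⊕ Fin n) F :=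
  Matrix.fromBlocks 0 1 (-1) 0

/-- `Sp_{2n}(F) = {g : g * J⁻¹ * gᵀ * J = 1}`. -/
def Sp (F : Type*) [Field F] (n : ℕ) : Set (Matrix (Fin n ⊕ Fin n) (Fin n ⊕ Fin n) F) :=
  {g | g * (Jmat F n)⁻¹ * gᵀ * Jmat F n = 1}

/-- `[P,P](F)`: elements of `Sp_{2n}(F)` of block form `(A, B; 0, (Aᵀ)⁻¹)` with `det A = 1`. -/
def SiegelPP (F : Type*) [Field F] (n : ℕ) :
    Set (Matrix (Fin n ⊕ Fin n) (Fin n ⊕ Fin n) F) :=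
  {g | g ∈ Sp F n ∧ ∃ A B : Matrix (Fin n) (Fin n) F,
    g = Matrix.fromBlocks A B 0 Aᵀ⁻¹ ∧ A.det = 1}

/-- The diagonal matrix `c(x) = diag(x^{−c}, I_{n−1}, x^{c}, I_{n−1})`. -/
noncomputable def cMat (F : Type*) [Field F] (n : ℕ) (x : F) (c : ℤ) :
    Matrix (Fin n ⊕ Fin n) (Fin n ⊕ Fin n) F :=
  Matrix.diagonal (Sum.elim
    (fun i : Fin n => if (i : ℕ) = 0 then x ^ (-c) else 1)
    (fun i : Fin n => if (i : ℕ) = 0 then x ^ c else 1))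

/-!
Let `M` be the bottom `n × 2n` row block of `g`; its rows span a Lagrangian subspace of `ℚ_p^{2n}`.
By compactness of `ℤ_p` there is an integral `X₀` maximising `‖det (M X)‖` over integral `X`, and
Cramer's rule turns maximality into integrality of `E⁻¹ M`, where `E = M X₀`. As `E⁻¹ M X₀ = 1`,
the rows of `E⁻¹ M` complete to an integral symplectic matrix `k`, so `g k⁻¹` lies in the Siegel
parabolic `P = [P,P] · {c(x)}`; writing `x = p^{-c} u` with `‖u‖ = 1` gives `g = q c(p) k'`.
For any such decomposition `max ‖det (M X)‖ = p^{-c}`, which pins down `c`.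
-/

namespace Matrix

variable {l m m' k k' R : Type*}

theorem toRows₂_mul [Fintype l] [NonUnitalNonAssocSemiring R] (A : Matrix (m ⊕ m') l R)
    (B : Matrix l k R) : (A * B).toRows₂ = A.toRows₂ * B :=
  rfl

theorem toBlocks₂₂_mul [Fintype l] [NonUnitalNonAssocSemiring R] (A : Matrix (m ⊕ m') l R)
    (B : Matrix l (k' ⊕ k) R) : (A * B).toBlocks₂₂ = A.toRows₂ * B.toCols₂ :=
  rfl

theorem toRows₂_fromBlocks_mul {n o : Type*} [Fintype n] [Fintype o] [Semiring R]
    (A : Matrix m n R) (B : Matrix m o R) (C : Matrix m' n R) (D : Matrix m' o R)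
    (Y : Matrix (n ⊕ o) k R) :
    (fromBlocks A B C D * Y).toRows₂ = C * Y.toRows₁ + D * Y.toRows₂ := by
  rw [← fromRows_toRows Y, fromBlocks_mul_fromRows, toRows₂_fromRows, toRows₁_fromRows,
    toRows₂_fromRows]

theorem exists_sub_transpose_eq [LinearOrder l] [AddCommGroup R] {T : Matrix l l R}
    (hT : Tᵀ = -T) (hdiag : ∀ i, T i i = 0) : ∃ S : Matrix l l R, S - Sᵀ = T := by
  refine ⟨of fun i j => if j < i then T i j else 0, ?_⟩
  ext i j
  have hji : T j i = -T i j := by simpa using congr_fun (congr_fun hT i) j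
  rcases lt_trichotomy i j with h | rfl | h
  · simp [h, h.not_gt, hji]
  · simp [hdiag]
  · simp [h, h.not_gt]

theorem mul_J_mul_transpose_apply_self [DecidableEq l] [Fintype l] [CommRing R]
    (X : Matrix m (l ⊕ l) R) (i : m) : (X * J l R * Xᵀ) i i = 0 := by
  simp [J, mul_apply, Fintype.sum_sum_type, fromBlocks, one_apply, mul_comm]

end Matrix

namespace SymplecticGroup

variable {l R : Type*} [DecidableEq l] [Fintype l] [CommRing R]

theorem transpose_mul_J_mul {m m' : Type*} (Y : Matrix m (l ⊕ l) R) (Z : Matrix m' (l ⊕ l) R) :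
    (Y * J l R * Zᵀ)ᵀ = -(Z * J l R * Yᵀ) := by
  simp [transpose_mul, Matrix.mul_assoc]

theorem exists_fromRows_mem [LinearOrder l] {M : Matrix l (l ⊕ l) R} {X : Matrix (l ⊕ l) l R}
    (hM : M * J l R * Mᵀ = 0) (hMX : M * X = 1) :
    ∃ N : Matrix l (l ⊕ l) R, fromRows N M ∈ symplecticGroup l R := by
  obtain ⟨N₀, hMN₀⟩ : ∃ N₀ : Matrix l (l ⊕ l) R, M * J l R * N₀ᵀ = 1 :=
    ⟨Xᵀ * J l R, by
      simp [transpose_mul, Matrix.mul_assoc, ← Matrix.mul_assoc (J l R), J_squared, hMX]⟩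
  have hN₀M : N₀ * J l R * Mᵀ = -1 := by
    rw [← transpose_transpose (N₀ * J l R * Mᵀ), transpose_mul_J_mul, hMN₀, transpose_neg,
      transpose_one]
  -- Correct `N₀` by `S * M` to make its rows isotropic; `S` exists since `T` is alternating.
  set T := N₀ * J l R * N₀ᵀ
  obtain ⟨S, hS⟩ := exists_sub_transpose_eq (T := -T) (by rw [transpose_neg, transpose_mul_J_mul])
    (fun i => by simp [T, mul_J_mul_transpose_apply_self])
  refine ⟨N₀ + S * M, ?_⟩
  have hMN : M * J l R * (N₀ + S * M)ᵀ = 1 := calc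
    _ = M * J l R * N₀ᵀ + M * J l R * Mᵀ * Sᵀ := by
      simp only [transpose_add, transpose_mul, Matrix.mul_add, Matrix.mul_assoc]
    _ = 1 := by rw [hMN₀, hM, Matrix.zero_mul, add_zero]
  have hNM : (N₀ + S * M) * J l R * Mᵀ = -1 := calc
    _ = N₀ * J l R * Mᵀ + S * (M * J l R * Mᵀ) := by
      simp only [Matrix.add_mul, Matrix.mul_assoc]
    _ = -1 := by rw [hN₀M, hM, Matrix.mul_zero, add_zero]
  have hNN : (N₀ + S * M) * J l R * (N₀ + S * M)ᵀ = 0 := calc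
    _ = T + N₀ * J l R * Mᵀ * Sᵀ + S * (M * J l R * N₀ᵀ) + S * (M * J l R * Mᵀ) * Sᵀ := by
      simp only [T, transpose_add, transpose_mul, Matrix.add_mul, Matrix.mul_add, Matrix.mul_assoc]
      abel
    _ = T - Sᵀ + S := by
      rw [hN₀M, hMN₀, hM, Matrix.mul_zero, Matrix.zero_mul, add_zero, Matrix.mul_one,
        Matrix.neg_mul, Matrix.one_mul, sub_eq_add_neg]
    _ = 0 := by rw [← neg_neg T, ← hS]; abel
  rw [mem_iff, transpose_fromRows, fromRows_mul, fromRows_mul_fromCols, hMN, hNM, hNN, hM, J]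

theorem toBlocks₂₂_mul_transpose_toBlocks₁₁ {A : Matrix (l ⊕ l) (l ⊕ l) R}
    (hA : A ∈ symplecticGroup l R) (h₂₁ : A.toBlocks₂₁ = 0) :
    A.toBlocks₂₂ * A.toBlocks₁₁ᵀ = 1 := by
  rw [← fromBlocks_toBlocks A, h₂₁, fromBlocks_mem_iff] at hA
  simpa [mul_eq_one_comm] using hA.2.2

theorem nonsing_inv_mem {A : Matrix (l ⊕ l) (l ⊕ l) R} (hA : A ∈ symplecticGroup l R) :
    A⁻¹ ∈ symplecticGroup l R := by
  simpa only [coe_inv'] using (⟨A, hA⟩⁻¹ : symplecticGroup l R).2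

theorem mem_of_map_mem {S : Type*} [CommRing S] {f : R →+* S} (hf : Function.Injective f)
    {A : Matrix (l ⊕ l) (l ⊕ l) R} (hA : A.map f ∈ symplecticGroup l S) :
    A ∈ symplecticGroup l R := by
  rw [mem_iff] at hA ⊢
  exact map_injective hf (by simpa [Matrix.map_mul, transpose_map] using hA)

end SymplecticGroup

section Field

variable {F : Type*} [Field F] {n : ℕ}

theorem Jmat_eq_neg_J : Jmat F n = -J (Fin n) F := by
  simp [Jmat, J, fromBlocks_neg]

theorem mem_Sp_iff {g : Matrix (Fin n ⊕ Fin n) (Fin n ⊕ Fin n) F} :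
    g ∈ Sp F n ↔ g ∈ symplecticGroup (Fin n) F := by
  have hJ : J (Fin n) F * -J (Fin n) F = 1 := by rw [Matrix.mul_neg, J_squared, neg_neg]
  have hJinv : (-J (Fin n) F)⁻¹ = J (Fin n) F := inv_eq_left_inv hJ
  rw [Sp, Set.mem_ofPred_eq, SymplecticGroup.mem_iff, Jmat_eq_neg_J, hJinv]
  exact ⟨fun h => (inv_eq_left_inv h).symm.trans hJinv, fun h => by rw [h, hJ]⟩

theorem mem_SiegelPP_of_toBlocks₂₁_eq_zero {q : Matrix (Fin n ⊕ Fin n) (Fin n ⊕ Fin n) F}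
    (hq : q ∈ Sp F n) (h₂₁ : q.toBlocks₂₁ = 0) (hdet : q.toBlocks₁₁.det = 1) :
    q ∈ SiegelPP F n := by
  refine ⟨hq, q.toBlocks₁₁, q.toBlocks₁₂, ?_, hdet⟩
  rw [inv_eq_left_inv (SymplecticGroup.toBlocks₂₂_mul_transpose_toBlocks₁₁ (mem_Sp_iff.1 hq) h₂₁),
    ← h₂₁, fromBlocks_toBlocks]

def cBlock (x : F) : Matrix (Fin n) (Fin n) F :=
  diagonal fun i => if (i : ℕ) = 0 then x else 1

theorem cBlock_mul_cBlock (x y : F) :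
    (cBlock x * cBlock y : Matrix (Fin n) (Fin n) F) = cBlock (x * y) := by
  rw [cBlock, cBlock, cBlock, diagonal_mul_diagonal]
  congr 1
  ext i
  split_ifs <;> simp

theorem cBlock_transpose (x : F) : (cBlock x : Matrix (Fin n) (Fin n) F)ᵀ = cBlock x :=
  diagonal_transpose _

theorem cBlock_one : (cBlock 1 : Matrix (Fin n) (Fin n) F) = 1 := by
  simp [cBlock]

theorem det_cBlock [NeZero n] (x : F) : (cBlock x : Matrix (Fin n) (Fin n) F).det = x := by
  simp [cBlock, Fin.val_eq_zero_iff]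

theorem cMat_eq_fromBlocks (x : F) (c : ℤ) :
    cMat F n x c = fromBlocks (cBlock (x ^ (-c))) 0 0 (cBlock (x ^ c)) := by
  rw [cMat, cBlock, cBlock, fromBlocks_diagonal]

theorem cMat_mem_symplecticGroup {x : F} (hx : x ≠ 0) (c : ℤ) :
    cMat F n x c ∈ symplecticGroup (Fin n) F := by
  rw [cMat_eq_fromBlocks, SymplecticGroup.fromBlocks_mem_iff]
  simp [cBlock_transpose, cBlock_mul_cBlock, inv_mul_cancel₀ (zpow_ne_zero c hx), cBlock_one]

theorem cMat_add {x : F} (hx : x ≠ 0) (a b : ℤ) :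
    cMat F n x (a + b) = cMat F n x a * cMat F n x b := by
  simp only [cMat_eq_fromBlocks, fromBlocks_multiply, cBlock_mul_cBlock, ← zpow_add₀ hx]
  simp [add_comm]

theorem cMat_zero (x : F) : cMat F n x 0 = 1 := by
  simp [cMat_eq_fromBlocks, cBlock_one]

theorem cMat_mul_cMat (x y : F) (c : ℤ) : cMat F n x c * cMat F n y c = cMat F n (x * y) c := by
  simp only [cMat_eq_fromBlocks, fromBlocks_multiply, cBlock_mul_cBlock, mul_zpow]
  simp

theorem cMat_zpow (x : F) (k c : ℤ) : cMat F n (x ^ k) c = cMat F n x (k * c) := by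
  simp only [cMat_eq_fromBlocks, ← _root_.zpow_mul, mul_neg]

theorem exists_mem_SiegelPP_mul_cMat [NeZero n] {h : Matrix (Fin n ⊕ Fin n) (Fin n ⊕ Fin n) F}
    (hh : h ∈ Sp F n) (h₂₁ : h.toBlocks₂₁ = 0) :
    ∃ x ≠ (0 : F), ∃ q ∈ SiegelPP F n, h = q * cMat F n x (-1) := by
  set x := h.toBlocks₁₁.det
  have hx : x ≠ 0 := by
    have := congrArg det
      (SymplecticGroup.toBlocks₂₂_mul_transpose_toBlocks₁₁ (mem_Sp_iff.1 hh) h₂₁)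
    rw [det_mul, det_transpose, det_one] at this
    exact right_ne_zero_of_mul_eq_one this
  have hq : h * cMat F n x 1 = fromBlocks (h.toBlocks₁₁ * cBlock x⁻¹) (h.toBlocks₁₂ * cBlock x)
      0 (h.toBlocks₂₂ * cBlock x) := by
    conv_lhs => rw [← fromBlocks_toBlocks h, h₂₁, cMat_eq_fromBlocks, fromBlocks_multiply]
    simp
  refine ⟨x, hx, h * cMat F n x 1, mem_SiegelPP_of_toBlocks₂₁_eq_zero ?_ ?_ ?_, ?_⟩
  · exact mem_Sp_iff.2 (mul_mem (mem_Sp_iff.1 hh) (cMat_mem_symplecticGroup hx 1))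
  · rw [hq, toBlocks_fromBlocks₂₁]
  · rw [hq, toBlocks_fromBlocks₁₁, det_mul, det_cBlock, mul_inv_cancel₀ hx]
  · rw [Matrix.mul_assoc, ← cMat_add hx, add_neg_cancel, cMat_zero, Matrix.mul_one]

theorem det_toRows₂_mul_cMat_mul [NeZero n] {q : Matrix (Fin n ⊕ Fin n) (Fin n ⊕ Fin n) F}
    (hq : q ∈ SiegelPP F n) (x : F) (c : ℤ) (k : Matrix (Fin n ⊕ Fin n) (Fin n ⊕ Fin n) F)
    (Y : Matrix (Fin n ⊕ Fin n) (Fin n) F) :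
    ((q * cMat F n x c * k).toRows₂ * Y).det = x ^ c * (k.toRows₂ * Y).det := by
  obtain ⟨-, A, B, rfl, hA⟩ := hq
  rw [Matrix.mul_assoc, toRows₂_fromBlocks_mul, cMat_eq_fromBlocks, toRows₂_fromBlocks_mul]
  simp only [Matrix.zero_mul, zero_add, Matrix.mul_assoc, det_mul, det_cBlock, det_nonsing_inv,
    det_transpose, hA, Ring.inverse_one, one_mul]

end Field

theorem norm_cMat_apply_le_one {F : Type*} [NormedField F] {n : ℕ} {u : F} (hu : ‖u‖ = 1) (c : ℤ)
    (i j : Fin n ⊕ Fin n) : ‖cMat F n u c i j‖ ≤ 1 := by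
  rw [cMat, diagonal_apply]
  split_ifs
  · rcases i with i | i <;> simp only [Sum.elim_inl, Sum.elim_inr] <;> split_ifs <;> simp [hu]
  · simp

local notation "ι" => PadicInt.Coe.ringHom

namespace Padic

open Filter

variable {p : ℕ} [Fact p.Prime] {m l : Type*}

theorem coe_ringHom_injective : Function.Injective (ι : ℤ_[p] →+* ℚ_[p]) :=
  Subtype.val_injective

theorem exists_map_eq_of_norm_le_one {A : Matrix m l ℚ_[p]} (hA : ∀ i j, ‖A i j‖ ≤ 1) :
    ∃ B : Matrix m l ℤ_[p], B.map ι = A :=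
  ⟨of fun i j => ⟨A i j, hA i j⟩, rfl⟩

theorem exists_pow_smul_norm_le_one [Finite m] [Finite l] (A : Matrix m l ℚ_[p]) :
    ∃ s : ℕ, ∀ i j, ‖((p : ℚ_[p]) ^ s • A) i j‖ ≤ 1 := by
  have : ∀ᶠ s in atTop, ∀ i j, ‖((p : ℚ_[p]) ^ s • A) i j‖ < 1 := by
    refine eventually_all.2 fun i => eventually_all.2 fun j => ?_
    have := ((tendsto_pow_atTop_nhds_zero_of_norm_lt_one norm_p_lt_one).mul_const (A i j)).norm
    rw [zero_mul, norm_zero] at this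
    exact this.eventually (gt_mem_nhds one_pos)
  obtain ⟨s, hs⟩ := this.exists
  exact ⟨s, fun i j => (hs i j).le⟩

theorem exists_forall_norm_det_mul_map_le [Fintype m] [DecidableEq m] [Fintype l]
    (M : Matrix m l ℚ_[p]) : ∃ X₀ : Matrix l m ℤ_[p], ∀ X : Matrix l m ℤ_[p],
      ‖(M * X.map ι).det‖ ≤ ‖(M * X₀.map ι).det‖ := by
  have : CompactSpace (Matrix l m ℤ_[p]) := inferInstanceAs (CompactSpace (l → m → ℤ_[p]))
  have hf : Continuous fun X : Matrix l m ℤ_[p] => ‖(M * X.map ι).det‖ :=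
    continuous_norm.comp
      (continuous_const.matrix_mul (continuous_id.matrix_map continuous_subtype_val)).matrix_det
  obtain ⟨X₀, -, hX₀⟩ := isCompact_univ.exists_isMaxOn Set.univ_nonempty hf.continuousOn
  exact ⟨X₀, fun X => isMaxOn_iff.1 hX₀ X trivial⟩

theorem norm_inv_mul_apply_le_one [Fintype m] [DecidableEq m] [Fintype l] [DecidableEq l]
    {M : Matrix m l ℚ_[p]} {X₀ : Matrix l m ℤ_[p]}
    (hmax : ∀ X : Matrix l m ℤ_[p],
      ‖(M * X.map ι).det‖ ≤ ‖(M * X₀.map ι).det‖)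
    (i : m) (j : l) : ‖((M * X₀.map ι)⁻¹ * M) i j‖ ≤ 1 := by
  set E := M * X₀.map ι
  -- By Cramer's rule the entry is a quotient of two determinants of the form `det (M * X)`.
  have hcramer : ((E⁻¹ * M) i j) = Ring.inverse E.det *
      (M * (X₀.updateCol i (Pi.single j 1)).map ι).det := by
    rw [map_updateCol, mul_updateCol, ← cramer_apply, cramer_eq_adjugate_mulVec]
    have hsingle : ⇑ι ∘ Pi.single j (1 : ℤ_[p]) = Pi.single j 1 := by
      ext; simp [Pi.single_apply, apply_ite]
    rw [hsingle, mulVec_single_one, inv_def, Matrix.smul_mul, Matrix.smul_apply, smul_eq_mul]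
    rfl
  rw [hcramer, Ring.inverse_eq_inv', norm_mul, norm_inv]
  exact inv_mul_le_one_of_le₀ (hmax _) (norm_nonneg _)

theorem exists_eq_mul_toRows₂_map [Fintype l] [DecidableEq l] [LinearOrder l]
    {M₀ : Matrix l (l ⊕ l) ℚ_[p]} {Y : Matrix (l ⊕ l) l ℚ_[p]}
    (hiso : M₀ * J l ℚ_[p] * M₀ᵀ = 0) (hY : M₀ * Y = 1) :
    ∃ E : Matrix l l ℚ_[p], ∃ K ∈ symplecticGroup l ℤ_[p],
      M₀ = E * (K.map ι).toRows₂ := by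
  obtain ⟨X₀, hmax⟩ := exists_forall_norm_det_mul_map_le M₀
  set E := M₀ * X₀.map ι
  have hE : IsUnit E.det := by
    obtain ⟨s, hs⟩ := exists_pow_smul_norm_le_one Y
    obtain ⟨X, hX⟩ := exists_map_eq_of_norm_le_one hs
    have hp : (p : ℚ_[p]) ≠ 0 := Nat.cast_ne_zero.2 (Fact.out : p.Prime).ne_zero
    have hdetX : (M₀ * X.map ι).det ≠ 0 := by
      simp [hX, hY, hp]
    exact isUnit_iff_ne_zero.2 fun h0 => hdetX (norm_le_zero_iff.1 (by simpa [h0] using hmax X))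
  obtain ⟨M, hM⟩ := exists_map_eq_of_norm_le_one (norm_inv_mul_apply_le_one hmax)
  have hMX : M * X₀ = 1 := by
    refine map_injective coe_ringHom_injective ?_
    beta_reduce
    rw [Matrix.map_mul, hM, Matrix.mul_assoc, nonsing_inv_mul _ hE,
      Matrix.map_one _ (map_zero _) (map_one _)]
  have hMiso : M * J l ℤ_[p] * Mᵀ = 0 := by
    refine map_injective coe_ringHom_injective ?_
    beta_reduce
    rw [Matrix.map_mul, Matrix.map_mul, map_J, transpose_map, hM, transpose_mul,
      Matrix.map_zero _ (map_zero _)]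
    calc E⁻¹ * M₀ * J l ℚ_[p] * (M₀ᵀ * E⁻¹ᵀ) = E⁻¹ * (M₀ * J l ℚ_[p] * M₀ᵀ) * E⁻¹ᵀ := by
          simp only [Matrix.mul_assoc]
      _ = 0 := by rw [hiso, Matrix.mul_zero, Matrix.zero_mul]
  obtain ⟨N, hN⟩ := SymplecticGroup.exists_fromRows_mem hMiso hMX
  refine ⟨E, fromRows N M, hN, ?_⟩
  change M₀ = E * (M.map ι)
  rw [hM, ← Matrix.mul_assoc, mul_nonsing_inv _ hE, Matrix.one_mul]

theorem exists_toBlocks₂₁_mul_inv_map_eq_zero {n : ℕ}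
    {g : Matrix (Fin n ⊕ Fin n) (Fin n ⊕ Fin n) ℚ_[p]} (hg : g ∈ symplecticGroup (Fin n) ℚ_[p]) :
    ∃ K ∈ symplecticGroup (Fin n) ℤ_[p],
      (g * (K.map ι)⁻¹).toBlocks₂₁ = 0 := by
  have hiso : g.toRows₂ * J (Fin n) ℚ_[p] * g.toRows₂ᵀ = 0 := by
    have := congrArg toBlocks₂₂ (SymplecticGroup.mem_iff.1 hg)
    rwa [toBlocks₂₂_mul, toRows₂_mul, J, toBlocks_fromBlocks₂₂] at this
  have hY : g.toRows₂ * g⁻¹.toCols₂ = 1 := by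
    rw [← toBlocks₂₂_mul, mul_nonsing_inv _ (SymplecticGroup.symplectic_det hg), ← fromBlocks_one,
      toBlocks_fromBlocks₂₂]
  obtain ⟨E, K, hK, hE⟩ := exists_eq_mul_toRows₂_map hiso hY
  refine ⟨K, hK, ?_⟩
  have hk := mul_nonsing_inv _ (SymplecticGroup.symplectic_det
    (SymplecticGroup.map_mem hK ι))
  change (g * _).toRows₂.toCols₁ = 0
  rw [toRows₂_mul, hE, Matrix.mul_assoc, ← toRows₂_mul, hk]
  change E * (1 : Matrix (Fin n ⊕ Fin n) (Fin n ⊕ Fin n) ℚ_[p]).toBlocks₂₁ = 0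
  rw [← fromBlocks_one, toBlocks_fromBlocks₂₁, Matrix.mul_zero]

theorem exists_eq_mem_SiegelPP_mul_cMat_mul_map {n : ℕ} [NeZero n]
    {h : Matrix (Fin n ⊕ Fin n) (Fin n ⊕ Fin n) ℚ_[p]} (hh : h ∈ Sp ℚ_[p] n)
    (h₂₁ : h.toBlocks₂₁ = 0) :
    ∃ q ∈ SiegelPP ℚ_[p] n, ∃ c : ℤ, ∃ U ∈ symplecticGroup (Fin n) ℤ_[p],
      h = q * cMat ℚ_[p] n p c * U.map ι := by
  obtain ⟨x, hx, q, hq, rfl⟩ := exists_mem_SiegelPP_mul_cMat hh h₂₁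
  have hp : (p : ℚ_[p]) ≠ 0 := Nat.cast_ne_zero.2 (Fact.out : p.Prime).ne_zero
  set u := (p : ℚ_[p]) ^ (-x.valuation) * x
  have hu : ‖u‖ = 1 := by
    rw [norm_mul, norm_p_zpow, norm_eq_zpow_neg_valuation hx, neg_neg,
      ← zpow_add₀ (by exact_mod_cast (Fact.out : p.Prime).ne_zero), add_neg_cancel, zpow_zero]
  have hu0 : u ≠ 0 := norm_ne_zero_iff.1 (hu ▸ one_ne_zero)
  obtain ⟨U, hU⟩ := exists_map_eq_of_norm_le_one (norm_cMat_apply_le_one hu (-1))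
  refine ⟨q, hq, -x.valuation, U, SymplecticGroup.mem_of_map_mem coe_ringHom_injective
    (hU ▸ cMat_mem_symplecticGroup hu0 (-1)), ?_⟩
  rw [hU, Matrix.mul_assoc, neg_eq_neg_one_mul x.valuation, mul_comm, ← cMat_zpow, cMat_mul_cMat,
    ← mul_assoc, ← zpow_add₀ hp, add_neg_cancel, zpow_zero, one_mul]

theorem isGreatest_norm_det_toRows₂_mul_map {n : ℕ} [NeZero n]
    {g q : Matrix (Fin n ⊕ Fin n) (Fin n ⊕ Fin n) ℚ_[p]} {c : ℤ}
    {K : Matrix (Fin n ⊕ Fin n) (Fin n ⊕ Fin n) ℤ_[p]} (hq : q ∈ SiegelPP ℚ_[p] n)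
    (hK : K ∈ symplecticGroup (Fin n) ℤ_[p])
    (hg : g = q * cMat ℚ_[p] n p c * K.map ι) :
    IsGreatest (Set.range fun X : Matrix (Fin n ⊕ Fin n) (Fin n) ℤ_[p] =>
      ‖(g.toRows₂ * X.map ι).det‖) ((p : ℝ) ^ (-c)) := by
  have hdet (X : Matrix (Fin n ⊕ Fin n) (Fin n) ℤ_[p]) :
      ‖(g.toRows₂ * X.map ι).det‖ = (p : ℝ) ^ (-c) * ‖(K.toRows₂ * X).det‖ := by
    rw [hg, det_toRows₂_mul_cMat_mul hq, norm_mul, norm_p_zpow, show (K.map ι).toRows₂ = K.toRows₂.map ι from rfl,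
      ← Matrix.map_mul, ← RingHom.mapMatrix_apply, ← RingHom.map_det]
    rfl
  refine ⟨⟨(⟨K, hK⟩⁻¹ : symplecticGroup (Fin n) ℤ_[p]).1.toCols₂, ?_⟩, ?_⟩
  · refine (hdet _).trans ?_
    have hKK : K * (⟨K, hK⟩⁻¹ : symplecticGroup (Fin n) ℤ_[p]).1 = 1 :=
      congrArg Subtype.val (mul_inv_cancel (⟨K, hK⟩ : symplecticGroup (Fin n) ℤ_[p]))
    rw [← toBlocks₂₂_mul, hKK, ← fromBlocks_one, toBlocks_fromBlocks₂₂, det_one, norm_one, mul_one]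
  · rintro _ ⟨X, rfl⟩
    exact (hdet X).trans_le <|
      mul_le_of_le_one_right (zpow_nonneg (Nat.cast_nonneg p) _) (PadicInt.norm_le_one _)

end Padic

open Padic in
/-- Iwasawa-type decomposition: every `g ∈ Sp_{2n}(ℚ_p)` lies in exactly one double coset
`[P,P](ℚ_p) · c(p) · Sp_{2n}(ℤ_p)`, `c ∈ ℤ`; i.e., `g = q · c(p) · k` with
`q ∈ [P,P](ℚ_p)`, `k ∈ Sp_{2n}(ℤ_p)`, and the integer `c` is uniquely determined by `g`. -/
theorem padic_iwasawa_double_coset (p : ℕ) [Fact p.Prime] (n : ℕ) (hn : 1 ≤ n)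
    (g : Matrix (Fin n ⊕ Fin n) (Fin n ⊕ Fin n) ℚ_[p]) (hg : g ∈ Sp ℚ_[p] n) :
    ∃! c : ℤ, ∃ q ∈ SiegelPP ℚ_[p] n, ∃ k ∈ Sp ℚ_[p] n,
      (∀ i j, ‖k i j‖ ≤ 1) ∧ g = q * cMat ℚ_[p] n (p : ℚ_[p]) c * k := by
  have : NeZero n := ⟨by omega⟩
  obtain ⟨K, hK, hP⟩ := exists_toBlocks₂₁_mul_inv_map_eq_zero (mem_Sp_iff.1 hg)
  have hk₀ := SymplecticGroup.map_mem hK ι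
  obtain ⟨q, hq, c, U, hU, hdec⟩ := exists_eq_mem_SiegelPP_mul_cMat_mul_map
    (mem_Sp_iff.2 (mul_mem (mem_Sp_iff.1 hg) (SymplecticGroup.nonsing_inv_mem hk₀))) hP
  have hg' : g = q * cMat ℚ_[p] n p c * (U * K).map ι := by
    rw [Matrix.map_mul, ← Matrix.mul_assoc, ← hdec, Matrix.mul_assoc,
      nonsing_inv_mul _ (SymplecticGroup.symplectic_det hk₀), Matrix.mul_one]
  refine ⟨c, ⟨q, hq, _, mem_Sp_iff.2 (SymplecticGroup.map_mem (mul_mem hU hK) _),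
    fun i j => PadicInt.norm_le_one _, hg'⟩, ?_⟩
  rintro c' ⟨q', hq', k', hk', hk'int, hg''⟩
  obtain ⟨K', rfl⟩ := exists_map_eq_of_norm_le_one hk'int
  have hK' := SymplecticGroup.mem_of_map_mem coe_ringHom_injective (mem_Sp_iff.1 hk')
  have := (isGreatest_norm_det_toRows₂_mul_map hq' hK' hg'').unique
    (isGreatest_norm_det_toRows₂_mul_map hq (mul_mem hU hK) hg')
  exact neg_injective (zpow_right_injective₀ (by exact_mod_cast (Fact.out : p.Prime).pos)
    (by exact_mod_cast (Fact.out : p.Prime).ne_one) this)
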